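/- arXiv:1504.03725 — 5 statements merged into one kernel-verified Lean document; each statement's English description precedes it below -/
import Mathlib

section
/- Let A, B be symmetric positive semidefinite matrices with A ≥ B (i.e., A - B positive semidefinite). Then the Kronecker products satisfy A ⊗ A ≥ B ⊗ B (i.e., A⊗A - B⊗B is positive semidefinite). -/
open Matrix Kronecker
open scoped ComplexOrder

theorem Matrix.kronecker_sub_kronecker {l m n p α : Type*} [Ring α]
    (A B : Matrix l m α) (C D : Matrix n p α) :
    A ⊗ₖ C - B ⊗ₖ D = A ⊗ₖ (C - D) + (A - B) ⊗ₖ D := by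
  ext i j
  simp only [sub_apply, add_apply, kroneckerMap_apply, mul_sub, sub_mul]
  abel

theorem Matrix.PosSemidef.kronecker_sub_kronecker {𝕜 m n : Type*} [RCLike 𝕜]
    [Finite m] [Finite n] {A B : Matrix m m 𝕜} {C D : Matrix n n 𝕜}
    (hA : A.PosSemidef) (hD : D.PosSemidef) (hAB : (A - B).PosSemidef)
    (hCD : (C - D).PosSemidef) :
    (A ⊗ₖ C - B ⊗ₖ D).PosSemidef := by
  rw [Matrix.kronecker_sub_kronecker]
  exact (hA.kronecker hCD).add (hAB.kronecker hD)

/-- If `A ≥ B ≥ 0` in the Loewner order, then `A ⊗ A ≥ B ⊗ B`. -/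
theorem kronecker_loewner_mono
    {n : ℕ} (A B : Matrix (Fin n) (Fin n) ℝ)
    (hA : A.PosSemidef) (hB : B.PosSemidef) (hAB : (A - B).PosSemidef) :
    (A ⊗ₖ A - B ⊗ₖ B).PosSemidef :=
  hA.kronecker_sub_kronecker hB hAB hAB
end

section
/- Let K, Q be symmetric positive definite / positive semidefinite matrices respectively, and t > 0. Then (1 + 1/t)·K⁻¹ ⊗ K⁻¹ - (K+Q)⁻¹ ⊗ (K+Q)⁻¹ is positive definite. -/
/-!
Write `A = K⁻¹` and `B = (K + Q)⁻¹`. Inversion reverses the Loewner order, so `0 ⪯ B ⪯ A`, and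
the Kronecker square is monotone on positive semidefinite matrices because
`A ⊗ A - B ⊗ B = A ⊗ (A - B) + (A - B) ⊗ B`. Hence the matrix in question is the positive
definite `(1/t) A ⊗ A` plus the positive semidefinite `A ⊗ A - B ⊗ B`.
-/

open Matrix Kronecker

namespace Matrix

open scoped ComplexOrder

variable {𝕜 ι : Type*} [RCLike 𝕜] [Fintype ι]

theorem inv_sub_inv_add_eq [DecidableEq ι] {K Q : Matrix ι ι 𝕜} (hK : IsUnit K)
    (hKQ : IsUnit (K + Q)) :
    K⁻¹ - (K + Q)⁻¹ = (K + Q)⁻¹ * (Q + Q * K⁻¹ * Q) * (K + Q)⁻¹ := by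
  calc K⁻¹ - (K + Q)⁻¹ = K⁻¹ * Q * (K + Q)⁻¹ := by
        rw [inv_sub_inv (iff_of_true hK hKQ), add_sub_cancel_left]
    _ = (K + Q)⁻¹ * ((K + Q) * K⁻¹) * Q * (K + Q)⁻¹ := by
        rw [← Matrix.mul_assoc, nonsing_inv_mul _ ((isUnit_iff_isUnit_det _).mp hKQ),
          Matrix.one_mul]
    _ = (K + Q)⁻¹ * (Q + Q * K⁻¹ * Q) * (K + Q)⁻¹ := by
        rw [Matrix.add_mul, mul_nonsing_inv _ ((isUnit_iff_isUnit_det _).mp hK)]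
        simp only [Matrix.mul_assoc, Matrix.add_mul, Matrix.one_mul]

theorem PosDef.inv_sub_inv_add_posSemidef [DecidableEq ι] {K Q : Matrix ι ι 𝕜} (hK : K.PosDef)
    (hQ : Q.PosSemidef) : (K⁻¹ - (K + Q)⁻¹).PosSemidef := by
  have hKQ : (K + Q).PosDef := hK.add_posSemidef hQ
  have hQKQ : (Q + Q * K⁻¹ * Q).PosSemidef := by
    simpa [hQ.1.eq] using hQ.add (hK.inv.posSemidef.conjTranspose_mul_mul_same Q)
  rw [inv_sub_inv_add_eq hK.isUnit hKQ.isUnit]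
  simpa [hKQ.inv.1.eq] using hQKQ.conjTranspose_mul_mul_same (K + Q)⁻¹

theorem PosSemidef.kronecker_self_sub_kronecker_self {A B : Matrix ι ι 𝕜} (hB : B.PosSemidef)
    (hAB : (A - B).PosSemidef) : (A ⊗ₖ A - B ⊗ₖ B).PosSemidef := by
  have hA : A.PosSemidef := by simpa using hAB.add hB
  have hsplit : A ⊗ₖ (A - B) + (A - B) ⊗ₖ B + B ⊗ₖ B = A ⊗ₖ A := by
    rw [add_assoc, ← add_kronecker, sub_add_cancel, ← kronecker_add, sub_add_cancel]
  rw [← hsplit, add_sub_cancel_right]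
  exact (hA.kronecker hAB).add (hAB.kronecker hB)

end Matrix

/-- For `K ≻ 0`, `Q ⪰ 0` and `t > 0`, the matrix
`(1 + 1/t) K⁻¹ ⊗ K⁻¹ - (K+Q)⁻¹ ⊗ (K+Q)⁻¹` is positive definite. -/
theorem barrier_hessian_posdef
    {n : ℕ} (K Q : Matrix (Fin n) (Fin n) ℝ) (t : ℝ)
    (hK : K.PosDef) (hQ : Q.PosSemidef) (ht : 0 < t) :
    ((1 + 1 / t) • (K⁻¹ ⊗ₖ K⁻¹) - (K + Q)⁻¹ ⊗ₖ (K + Q)⁻¹).PosDef := by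
  have hKinv : (K⁻¹ ⊗ₖ K⁻¹).PosDef := hK.inv.kronecker hK.inv
  have hmono : (K⁻¹ ⊗ₖ K⁻¹ - (K + Q)⁻¹ ⊗ₖ (K + Q)⁻¹).PosSemidef :=
    (hK.add_posSemidef hQ).inv.posSemidef.kronecker_self_sub_kronecker_self
      (hK.inv_sub_inv_add_posSemidef hQ)
  rw [add_smul, one_smul, add_comm, add_sub_assoc]
  exact (hKinv.smul (one_div_pos.mpr ht)).add_posSemidef hmono
end

section
/- Let W, W2 be symmetric positive semidefinite matrices with W ≥ W2, and let R be symmetric positive semidefinite. Then (I + W R)⁻¹ W ≥ (I + W2 R)⁻¹ W2 in the Loewner order (both matrices are symmetric whenever the inverses exist, which they do since I + W R has positive determinant for W, R ⪰ 0). -/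
open Matrix

/-!
Writing `W = Bᴴ B`, Sylvester's determinant identity gives
`det (1 + W R) = det (1 + B R Bᴴ) > 0`, so all the inverses exist. Push-through identities
`(1 + P Q)⁻¹ P = P (1 + Q P)⁻¹` then show that, with `A = 1 + W R` and `D = W - W₂`,
`(1 + W R)⁻¹ W - (1 + W₂ R)⁻¹ W₂ = A⁻¹ (D + D N D) A⁻ᴴ` where `N = (1 + R W₂)⁻¹ R`,
and `N ⪰ 0` because `(1 + P Q)⁻¹ P = A⁻¹ (P + P Q P) A⁻ᴴ` for `A = 1 + P Q`.
-/

namespace Matrix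

section CommRing

variable {n α : Type*} [Fintype n] [DecidableEq n] [CommRing α]

lemma inv_one_add_mul_mul_comm {P Q : Matrix n n α} (h : IsUnit (1 + P * Q).det) :
    (1 + P * Q)⁻¹ * P = P * (1 + Q * P)⁻¹ := by
  have h' : IsUnit (1 + Q * P).det := by rwa [det_one_add_mul_comm]
  calc (1 + P * Q)⁻¹ * P = (1 + P * Q)⁻¹ * (P * (1 + Q * P)) * (1 + Q * P)⁻¹ := by
        rw [← Matrix.mul_assoc, mul_nonsing_inv_cancel_right _ _ h']
    _ = (1 + P * Q)⁻¹ * ((1 + P * Q) * P) * (1 + Q * P)⁻¹ := by noncomm_ring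
    _ = P * (1 + Q * P)⁻¹ := by rw [nonsing_inv_mul_cancel_left _ _ h]

lemma inv_one_add_mul_mul_sub_inv_one_add_mul_mul {W W₂ R : Matrix n n α}
    (hW : IsUnit (1 + W * R).det) (hW₂ : IsUnit (1 + W₂ * R).det) :
    (1 + W * R)⁻¹ * W - (1 + W₂ * R)⁻¹ * W₂ =
      (1 + W * R)⁻¹ * (W - W₂ + (W - W₂) * ((1 + R * W₂)⁻¹ * R) * (W - W₂)) *
        (1 + R * W)⁻¹ := by
  set D := W - W₂
  set C := 1 + R * W₂
  have hC : IsUnit C.det := by rwa [det_one_add_mul_comm]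
  have hRW : IsUnit (1 + R * W).det := by rwa [det_one_add_mul_comm]
  have hWC : W * C - (1 + W * R) * W₂ = D := by simp only [C, D]; noncomm_ring
  have hCRD : C + R * D = 1 + R * W := by simp only [C, D]; noncomm_ring
  calc (1 + W * R)⁻¹ * W - (1 + W₂ * R)⁻¹ * W₂
      = (1 + W * R)⁻¹ * (W * C - (1 + W * R) * W₂) * C⁻¹ := by
        rw [inv_one_add_mul_mul_comm hW₂, Matrix.mul_sub, Matrix.sub_mul,
          Matrix.mul_assoc _ (W * C), mul_nonsing_inv_cancel_right _ _ hC,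
          nonsing_inv_mul_cancel_left _ _ hW]
    _ = (1 + W * R)⁻¹ * (D * C⁻¹ * (C + R * D)) * (1 + R * W)⁻¹ := by
        rw [hWC, hCRD, Matrix.mul_assoc, Matrix.mul_assoc, mul_nonsing_inv_cancel_right _ _ hRW]
    _ = (1 + W * R)⁻¹ * (D + D * (C⁻¹ * R) * D) * (1 + R * W)⁻¹ := by
        rw [Matrix.mul_add, Matrix.mul_assoc D, nonsing_inv_mul _ hC]; noncomm_ring

end CommRing

section RCLike

open scoped ComplexOrder

variable {n 𝕜 : Type*} [Fintype n] [DecidableEq n] [RCLike 𝕜] {P Q : Matrix n n 𝕜}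

open scoped MatrixOrder in
lemma isUnit_det_one_add_mul_of_posSemidef (hP : P.PosSemidef) (hQ : Q.PosSemidef) :
    IsUnit (1 + P * Q).det := by
  obtain ⟨B, rfl⟩ := CStarAlgebra.nonneg_iff_eq_star_mul_self.mp hP.nonneg
  rw [Matrix.mul_assoc, det_one_add_mul_comm, ← isUnit_iff_isUnit_det, star_eq_conjTranspose]
  exact (PosDef.one.add_posSemidef (hQ.mul_mul_conjTranspose_same B)).isUnit

lemma conjTranspose_inv_one_add_mul (hP : P.IsHermitian) (hQ : Q.IsHermitian) :
    (1 + P * Q)⁻¹ᴴ = (1 + Q * P)⁻¹ := by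
  rw [conjTranspose_nonsing_inv, conjTranspose_add, conjTranspose_one, conjTranspose_mul, hP.eq,
    hQ.eq]

lemma posSemidef_inv_one_add_mul_mul (hP : P.PosSemidef) (hQ : Q.PosSemidef) :
    ((1 + P * Q)⁻¹ * P).PosSemidef := by
  have hQP := isUnit_det_one_add_mul_of_posSemidef hQ hP
  have h : (1 + P * Q)⁻¹ * P = (1 + P * Q)⁻¹ * (P + P * Q * P) * (1 + P * Q)⁻¹ᴴ := by
    rw [conjTranspose_inv_one_add_mul hP.isHermitian hQ.isHermitian,
      show P + P * Q * P = P * (1 + Q * P) by noncomm_ring, Matrix.mul_assoc,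
      mul_nonsing_inv_cancel_right _ _ hQP]
  rw [h]
  refine PosSemidef.mul_mul_conjTranspose_same ?_ _
  simpa [hP.isHermitian.eq] using hP.add (hQ.mul_mul_conjTranspose_same P)

end RCLike

end Matrix

/-- For symmetric positive semidefinite `W ≥ W2` and `R ⪰ 0`,
`(I + W R)⁻¹ W ≥ (I + W2 R)⁻¹ W2` in the Loewner order. -/
theorem Z_loewner_mono
    {m : ℕ} (W W2 R : Matrix (Fin m) (Fin m) ℝ)
    (hW : W.PosSemidef) (hW2 : W2.PosSemidef) (hR : R.PosSemidef)
    (hWW2 : (W - W2).PosSemidef) :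
    ((1 + W * R)⁻¹ * W - (1 + W2 * R)⁻¹ * W2).PosSemidef := by
  rw [inv_one_add_mul_mul_sub_inv_one_add_mul_mul (isUnit_det_one_add_mul_of_posSemidef hW hR)
      (isUnit_det_one_add_mul_of_posSemidef hW2 hR),
    ← conjTranspose_inv_one_add_mul hW.isHermitian hR.isHermitian]
  refine PosSemidef.mul_mul_conjTranspose_same ?_ _
  have hDND := (posSemidef_inv_one_add_mul_mul hR hW2).mul_mul_conjTranspose_same (W - W2)
  rw [hWW2.isHermitian.eq] at hDND
  exact hWW2.add hDND
end

section
/- For symmetric positive definite W1, W2 and positive semidefinite R, the function C(R) = (1/2)(ln det(I + W1 R) - ln det(I + W2 R)) satisfies C(R) ≥ 0 for all R ⪰ 0 whenever W1 ≥ W2 (degraded case), and moreover C is concave on the cone of positive semidefinite matrices in this case. -/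
/-!
Write `W1 = W2 + Bᴴ B`. With `G(R) = R (1 + W2 R)⁻¹`, the factorization
`1 + W1 R = (1 + Bᴴ B G(R)) (1 + W2 R)` shows that the rate is `½ log det (1 + B G(R) Bᴴ)`.
The map `G` is operator concave: in the Loewner order, `G(R)` is the minimum over `Y` of
`(1 - W2 Y)ᴴ R (1 - W2 Y) + Yᴴ W2 Y`, attained at `Y = G(R)`, and each of these bounds is affine
in `R`. Since `log det` is monotone and concave on positive definite matrices, the rate is concave;
it is nonnegative because `1 + B G(R) Bᴴ ≥ 1`.
-/

open Matrix
open scoped MatrixOrder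

namespace Matrix

variable {n : Type*} [Fintype n] [DecidableEq n]

theorem det_one_add_mul_pos {W R : Matrix n n ℝ} (hW : W.PosSemidef) (hR : R.PosSemidef) :
    0 < (1 + W * R).det := by
  obtain ⟨B, rfl⟩ := CStarAlgebra.nonneg_iff_eq_star_mul_self.mp hW.nonneg
  rw [mul_assoc, det_one_add_mul_comm]
  exact (PosDef.one.add_posSemidef (hR.mul_mul_conjTranspose_same B)).det_pos

/-- `R (1 + W R)⁻¹`, which is `(R⁻¹ + W)⁻¹` when `R` is invertible. -/
noncomputable def parallelGain (W R : Matrix n n ℝ) : Matrix n n ℝ := R * (1 + W * R)⁻¹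

section parallelGain

variable {W R : Matrix n n ℝ}

theorem isHermitian_parallelGain (hW : W.PosSemidef) (hR : R.PosSemidef) :
    (parallelGain W R).IsHermitian := by
  have hWR : IsUnit (1 + W * R).det := (det_one_add_mul_pos hW hR).ne'.isUnit
  have hRW : IsUnit (1 + R * W).det := (det_one_add_mul_pos hR hW).ne'.isUnit
  have hcomm : (1 + R * W) * R = R * (1 + W * R) := by noncomm_ring
  calc (parallelGain W R)ᴴ = (1 + R * W)⁻¹ * R := by
        rw [parallelGain, conjTranspose_mul, conjTranspose_nonsing_inv, conjTranspose_add,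
          conjTranspose_one, conjTranspose_mul, hW.1.eq, hR.1.eq]
    _ = (1 + R * W)⁻¹ * ((1 + R * W) * R) * (1 + W * R)⁻¹ := by
        rw [hcomm, mul_assoc, mul_assoc, mul_nonsing_inv _ hWR, mul_one]
    _ = parallelGain W R := by rw [← mul_assoc, nonsing_inv_mul _ hRW, one_mul, parallelGain]

theorem quadratic_bound_eq_parallelGain_add (hW : W.PosSemidef) (hR : R.PosSemidef)
    (Y : Matrix n n ℝ) :
    (1 - W * Y)ᴴ * R * (1 - W * Y) + Yᴴ * W * Y =
      parallelGain W R + (Y - parallelGain W R)ᴴ * (W * R * W + W) * (Y - parallelGain W R) := by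
  set X := (1 + W * R)⁻¹
  set E := Y - R * X
  have hX : X + W * (R * X) = 1 := by
    simpa [add_mul, mul_assoc] using
      mul_nonsing_inv (1 + W * R) (det_one_add_mul_pos hW hR).ne'.isUnit
  have hG : Xᴴ * R = R * X := by
    have h := (isHermitian_parallelGain hW hR).eq
    rwa [parallelGain, conjTranspose_mul, hR.1.eq] at h
  have hY : Y = R * X + E := by simp [E]
  calc (1 - W * Y)ᴴ * R * (1 - W * Y) + Yᴴ * W * Y
      = (Xᴴ - Eᴴ * W) * R * (X - W * E) + (Xᴴ * R + Eᴴ) * W * (R * X + E) := by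
        rw [hY, ← hX]
        simp only [conjTranspose_sub, conjTranspose_add, conjTranspose_mul, hW.1.eq, hR.1.eq]
        noncomm_ring
    _ = Xᴴ * R * (X + W * (R * X)) + Eᴴ * (W * R * W + W) * E := by noncomm_ring
    _ = _ := by rw [hX, mul_one, hG]; rfl

theorem parallelGain_eq_quadratic_bound (hW : W.PosSemidef) (hR : R.PosSemidef) :
    parallelGain W R = (1 - W * parallelGain W R)ᴴ * R * (1 - W * parallelGain W R) +
      (parallelGain W R)ᴴ * W * parallelGain W R := by
  rw [quadratic_bound_eq_parallelGain_add hW hR, sub_self, conjTranspose_zero, zero_mul,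
    mul_zero, add_zero]

theorem parallelGain_le_quadratic_bound (hW : W.PosSemidef) (hR : R.PosSemidef)
    (Y : Matrix n n ℝ) :
    parallelGain W R ≤ (1 - W * Y)ᴴ * R * (1 - W * Y) + Yᴴ * W * Y := by
  have hWRW : (W * R * W + W).PosSemidef := by
    simpa only [hW.1.eq] using (hR.conjTranspose_mul_mul_same W).add hW
  rw [quadratic_bound_eq_parallelGain_add hW hR Y, le_add_iff_nonneg_right]
  exact (hWRW.conjTranspose_mul_mul_same _).nonneg

theorem posSemidef_parallelGain (hW : W.PosSemidef) (hR : R.PosSemidef) :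
    (parallelGain W R).PosSemidef := by
  rw [parallelGain_eq_quadratic_bound hW hR]
  exact (hR.conjTranspose_mul_mul_same _).add (hW.conjTranspose_mul_mul_same _)

end parallelGain

theorem parallelGain_concave {W R₁ R₂ : Matrix n n ℝ} (hW : W.PosSemidef) (hR₁ : R₁.PosSemidef)
    (hR₂ : R₂.PosSemidef) {l : ℝ} (hl₀ : 0 ≤ l) (hl₁ : l ≤ 1) :
    l • parallelGain W R₁ + (1 - l) • parallelGain W R₂ ≤
      parallelGain W (l • R₁ + (1 - l) • R₂) := by
  have hR : (l • R₁ + (1 - l) • R₂).PosSemidef :=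
    (hR₁.smul hl₀).add (hR₂.smul (sub_nonneg.2 hl₁))
  set Y := parallelGain W (l • R₁ + (1 - l) • R₂)
  calc l • parallelGain W R₁ + (1 - l) • parallelGain W R₂
      ≤ l • ((1 - W * Y)ᴴ * R₁ * (1 - W * Y) + Yᴴ * W * Y) +
          (1 - l) • ((1 - W * Y)ᴴ * R₂ * (1 - W * Y) + Yᴴ * W * Y) := by
        gcongr
        exacts [parallelGain_le_quadratic_bound hW hR₁ Y,
          parallelGain_le_quadratic_bound hW hR₂ Y]
    _ = (1 - W * Y)ᴴ * (l • R₁ + (1 - l) • R₂) * (1 - W * Y) + Yᴴ * W * Y := by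
        simp only [Matrix.mul_add, Matrix.add_mul, Matrix.mul_smul, Matrix.smul_mul]
        module
    _ = Y := (parallelGain_eq_quadratic_bound hW hR).symm

theorem log_det_le_trace_sub_card {X : Matrix n n ℝ} (hX : X.PosDef) :
    Real.log X.det ≤ X.trace - Fintype.card n := by
  have hμ := hX.eigenvalues_pos
  rw [hX.isHermitian.det_eq_prod_eigenvalues, hX.isHermitian.trace_eq_sum_eigenvalues]
  simp only [RCLike.ofReal_real_eq_id, id]
  rw [Real.log_prod fun i _ => (hμ i).ne']
  calc ∑ i, Real.log (hX.isHermitian.eigenvalues i)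
      ≤ ∑ i, (hX.isHermitian.eigenvalues i - 1) :=
        Finset.sum_le_sum fun i _ => Real.log_le_sub_one_of_pos (hμ i)
    _ = _ := by simp [Finset.sum_sub_distrib]

theorem log_det_le_log_det_add_trace_inv_mul {A C : Matrix n n ℝ} (hA : A.PosDef)
    (hC : C.PosDef) : Real.log A.det ≤ Real.log C.det + (C⁻¹ * A).trace - Fintype.card n := by
  obtain ⟨B, hB⟩ := CStarAlgebra.nonneg_iff_eq_star_mul_self.mp hC.inv.posSemidef.nonneg
  have hdet : (B * A * Bᴴ).det = A.det * C.det⁻¹ := by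
    rw [det_mul, det_mul, mul_comm, ← mul_assoc, ← det_mul, ← star_eq_conjTranspose, ← hB,
      det_nonsing_inv, Ring.inverse_eq_inv', mul_comm]
  have hX : (B * A * Bᴴ).PosDef := by
    refine ((hA.posSemidef.mul_mul_conjTranspose_same B).posDef_iff_det_ne_zero).2 ?_
    rw [hdet]
    exact (mul_pos hA.det_pos (inv_pos.2 hC.det_pos)).ne'
  have htr : (B * A * Bᴴ).trace = (C⁻¹ * A).trace := by
    rw [hB, trace_mul_comm, ← mul_assoc, star_eq_conjTranspose]
  have h := log_det_le_trace_sub_card hX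
  rw [hdet, htr, Real.log_mul hA.det_pos.ne' (inv_pos.2 hC.det_pos).ne', Real.log_inv] at h
  linarith

theorem PosSemidef.trace_mul_nonneg {A B : Matrix n n ℝ} (hA : A.PosSemidef)
    (hB : B.PosSemidef) : 0 ≤ (A * B).trace := by
  obtain ⟨X, rfl⟩ := CStarAlgebra.nonneg_iff_eq_star_mul_self.mp hA.nonneg
  rw [mul_assoc, trace_mul_comm]
  exact (hB.mul_mul_conjTranspose_same X).trace_nonneg

theorem log_det_concave {A B C : Matrix n n ℝ} (hA : A.PosDef) (hB : B.PosDef) (hC : C.PosDef)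
    {l : ℝ} (hl₀ : 0 ≤ l) (hl₁ : l ≤ 1) (hle : l • A + (1 - l) • B ≤ C) :
    l * Real.log A.det + (1 - l) * Real.log B.det ≤ Real.log C.det := by
  have hA' := log_det_le_log_det_add_trace_inv_mul hA hC
  have hB' := log_det_le_log_det_add_trace_inv_mul hB hC
  have htr : l * (C⁻¹ * A).trace + (1 - l) * (C⁻¹ * B).trace ≤ Fintype.card n := by
    have h := hC.inv.posSemidef.trace_mul_nonneg hle
    rw [Matrix.mul_sub, nonsing_inv_mul _ hC.det_pos.ne'.isUnit, trace_sub, trace_one,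
      Matrix.mul_add, Matrix.mul_smul, Matrix.mul_smul, trace_add, trace_smul, trace_smul] at h
    simpa using h
  nlinarith

theorem log_det_le_log_det_of_le {A C : Matrix n n ℝ} (hA : A.PosDef) (hC : C.PosDef)
    (hle : A ≤ C) : Real.log A.det ≤ Real.log C.det := by
  simpa using log_det_concave hA hA hC zero_le_one le_rfl (by simpa using hle)

section conj

variable {m : Type*} [Fintype m] [DecidableEq m] {W R : Matrix n n ℝ}

theorem posDef_one_add_mul_parallelGain_mul (hW : W.PosSemidef) (hR : R.PosSemidef)
    (B : Matrix m n ℝ) : (1 + B * parallelGain W R * Bᴴ).PosDef :=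
  PosDef.one.add_posSemidef ((posSemidef_parallelGain hW hR).mul_mul_conjTranspose_same B)

theorem log_det_one_add_add_mul_sub (hW : W.PosSemidef) (hR : R.PosSemidef)
    (B : Matrix m n ℝ) :
    Real.log (1 + (W + Bᴴ * B) * R).det - Real.log (1 + W * R).det =
      Real.log (1 + B * parallelGain W R * Bᴴ).det := by
  have hWR := det_one_add_mul_pos hW hR
  have hfac : 1 + (W + Bᴴ * B) * R = (1 + Bᴴ * (B * parallelGain W R)) * (1 + W * R) := by
    rw [parallelGain, add_mul (1 : Matrix n n ℝ), one_mul]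
    simp only [Matrix.mul_assoc]
    rw [nonsing_inv_mul _ hWR.ne'.isUnit, mul_one, add_mul, Matrix.mul_assoc]
    abel
  rw [hfac, det_mul, det_one_add_mul_comm,
    Real.log_mul (posDef_one_add_mul_parallelGain_mul hW hR B).det_pos.ne' hWR.ne',
    add_sub_cancel_right]

theorem one_add_mul_parallelGain_mul_concave {R₁ R₂ : Matrix n n ℝ} (hW : W.PosSemidef)
    (hR₁ : R₁.PosSemidef) (hR₂ : R₂.PosSemidef) (B : Matrix m n ℝ) {l : ℝ} (hl₀ : 0 ≤ l)
    (hl₁ : l ≤ 1) :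
    l • (1 + B * parallelGain W R₁ * Bᴴ) + (1 - l) • (1 + B * parallelGain W R₂ * Bᴴ) ≤
      1 + B * parallelGain W (l • R₁ + (1 - l) • R₂) * Bᴴ :=
  calc l • (1 + B * parallelGain W R₁ * Bᴴ) + (1 - l) • (1 + B * parallelGain W R₂ * Bᴴ)
      = 1 + B * (l • parallelGain W R₁ + (1 - l) • parallelGain W R₂) * Bᴴ := by
        simp only [Matrix.mul_add, Matrix.add_mul, Matrix.mul_smul, Matrix.smul_mul]
        module
    _ ≤ _ := by
        rw [add_le_add_iff_left, le_iff, ← Matrix.sub_mul, ← Matrix.mul_sub]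
        exact (parallelGain_concave hW hR₁ hR₂ hl₀ hl₁).mul_mul_conjTranspose_same B

end conj

end Matrix

theorem secrecy_rate_nonneg_and_concave_degraded_general
    {m : ℕ} (W1 W2 : Matrix (Fin m) (Fin m) ℝ)
    (hW2 : W2.PosSemidef) (hdeg : (W1 - W2).PosSemidef) :
    (∀ R : Matrix (Fin m) (Fin m) ℝ, R.PosSemidef →
      0 ≤ (1 / 2 : ℝ) * (Real.log (1 + W1 * R).det - Real.log (1 + W2 * R).det)) ∧
    (∀ R1 R2 : Matrix (Fin m) (Fin m) ℝ, R1.PosSemidef → R2.PosSemidef →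
      ∀ l : ℝ, l ∈ Set.Icc (0 : ℝ) 1 →
        l * ((1 / 2 : ℝ) * (Real.log (1 + W1 * R1).det - Real.log (1 + W2 * R1).det)) +
          (1 - l) * ((1 / 2 : ℝ) *
            (Real.log (1 + W1 * R2).det - Real.log (1 + W2 * R2).det)) ≤
        (1 / 2 : ℝ) * (Real.log (1 + W1 * (l • R1 + (1 - l) • R2)).det -
          Real.log (1 + W2 * (l • R1 + (1 - l) • R2)).det)) := by
  obtain ⟨B, hB⟩ := CStarAlgebra.nonneg_iff_eq_star_mul_self.mp hdeg.nonneg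
  obtain rfl : W1 = W2 + Bᴴ * B := by rw [← star_eq_conjTranspose, ← hB]; abel
  refine ⟨fun R hR => ?_, fun R₁ R₂ hR₁ hR₂ l ⟨hl₀, hl₁⟩ => ?_⟩
  · have h := log_det_le_log_det_of_le PosDef.one (posDef_one_add_mul_parallelGain_mul hW2 hR B)
      (le_add_of_nonneg_right
        ((posSemidef_parallelGain hW2 hR).mul_mul_conjTranspose_same B).nonneg)
    rw [log_det_one_add_add_mul_sub hW2 hR B]
    simp only [det_one, Real.log_one] at h
    exact mul_nonneg one_half_pos.le h
  · have hR : (l • R₁ + (1 - l) • R₂).PosSemidef :=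
      (hR₁.smul hl₀).add (hR₂.smul (sub_nonneg.2 hl₁))
    have h := log_det_concave (posDef_one_add_mul_parallelGain_mul hW2 hR₁ B)
      (posDef_one_add_mul_parallelGain_mul hW2 hR₂ B)
      (posDef_one_add_mul_parallelGain_mul hW2 hR B)
      hl₀ hl₁ (one_add_mul_parallelGain_mul_concave hW2 hR₁ hR₂ B hl₀ hl₁)
    rw [log_det_one_add_add_mul_sub hW2 hR₁ B, log_det_one_add_add_mul_sub hW2 hR₂ B,
      log_det_one_add_add_mul_sub hW2 hR B]
    linarith

/-- In the degraded case `W1 ≥ W2 ⪰ 0`, the secrecy rate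
`C(R) = ½(ln det(I + W1 R) - ln det(I + W2 R))` is nonnegative for all `R ⪰ 0`, and is
concave on the cone of positive semidefinite matrices. -/
theorem secrecy_rate_nonneg_and_concave_degraded
    {m : ℕ} (W1 W2 : Matrix (Fin m) (Fin m) ℝ)
    (hW1 : W1.PosSemidef) (hW2 : W2.PosSemidef) (hdeg : (W1 - W2).PosSemidef) :
    (∀ R : Matrix (Fin m) (Fin m) ℝ, R.PosSemidef →
      0 ≤ (1 / 2 : ℝ) * (Real.log (1 + W1 * R).det - Real.log (1 + W2 * R).det)) ∧
    (∀ R1 R2 : Matrix (Fin m) (Fin m) ℝ, R1.PosSemidef → R2.PosSemidef →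
      ∀ l : ℝ, l ∈ Set.Icc (0 : ℝ) 1 →
        l * ((1 / 2 : ℝ) * (Real.log (1 + W1 * R1).det - Real.log (1 + W2 * R1).det)) +
          (1 - l) * ((1 / 2 : ℝ) *
            (Real.log (1 + W1 * R2).det - Real.log (1 + W2 * R2).det)) ≤
        (1 / 2 : ℝ) * (Real.log (1 + W1 * (l • R1 + (1 - l) • R2)).det -
          Real.log (1 + W2 * (l • R1 + (1 - l) • R2)).det)) :=
  secrecy_rate_nonneg_and_concave_degraded_general W1 W2 hW2 hdeg
end

section
/- For symmetric positive semidefinite matrices A, B, R (all m×m), det(I + (A+B)R) ≥ det(I + A R); i.e., adding a positive semidefinite term to the 'channel Gram matrix' cannot decrease the log-det mutual information. -/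
/-!
With `r = √R`, the Weinstein–Aronszajn identity `det (1 + X Y) = det (1 + Y X)` gives
`det (1 + M R) = det (1 + r M r)`, so the claim becomes `det P ≤ det (P + T)` for
`P = 1 + r A r ≻ 0` and `T = r B r ⪰ 0`. Writing `P + T = P (1 + P⁻¹ T)` and using the same
identity with `√T` reduces this to `1 ≤ det (1 + √T P⁻¹ √T)`, a product of eigenvalues `1 + λᵢ`
with `λᵢ ≥ 0`.
-/

open Matrix
open scoped MatrixOrder

namespace Matrix
variable {n : Type*} [Fintype n] [DecidableEq n]

theorem IsHermitian.det_cfc {A : Matrix n n ℝ} (hA : A.IsHermitian) (f : ℝ → ℝ) :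
    (cfc f A).det = ∏ i, f (hA.eigenvalues i) := by
  rw [hA.cfc_eq]
  simp [IsHermitian.cfc, -Unitary.conjStarAlgAut_apply]

theorem PosSemidef.one_le_det_one_add {U : Matrix n n ℝ} (hU : U.PosSemidef) :
    1 ≤ (1 + U).det := by
  have hsa : IsSelfAdjoint U := hU.isHermitian
  have h : 1 + U = cfc (fun x : ℝ => 1 + x) U := by
    rw [cfc_add .., cfc_const_one .., cfc_id' ..]
  rw [h, hU.isHermitian.det_cfc]
  exact Finset.one_le_prod fun i _ => le_add_of_nonneg_right (hU.eigenvalues_nonneg i)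

theorem PosSemidef.det_one_add_mul_eq_det_one_add_sqrt_mul_mul_sqrt {R : Matrix n n ℝ}
    (hR : R.PosSemidef) (M : Matrix n n ℝ) :
    (1 + M * R).det = (1 + CFC.sqrt R * M * CFC.sqrt R).det := by
  conv_lhs => rw [← CFC.sqrt_mul_sqrt_self R hR.nonneg, ← Matrix.mul_assoc, det_one_add_mul_comm]
  rw [Matrix.mul_assoc]

theorem PosSemidef.sqrt_mul_mul_sqrt {M : Matrix n n ℝ} (hM : M.PosSemidef)
    (R : Matrix n n ℝ) : (CFC.sqrt R * M * CFC.sqrt R).PosSemidef := by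
  have h := hM.conjTranspose_mul_mul_same (CFC.sqrt R)
  rwa [(CFC.sqrt_nonneg R).posSemidef.isHermitian.eq] at h

theorem PosDef.det_le_det_add {P T : Matrix n n ℝ} (hP : P.PosDef) (hT : T.PosSemidef) :
    P.det ≤ (P + T).det := by
  have hPT : P + T = P * (1 + P⁻¹ * T) := by
    rw [Matrix.mul_add, Matrix.mul_one,
      Matrix.mul_nonsing_inv_cancel_left _ _ hP.det_pos.ne'.isUnit]
  calc P.det = P.det * 1 := (mul_one _).symm
    _ ≤ P.det * (1 + CFC.sqrt T * P⁻¹ * CFC.sqrt T).det :=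
      mul_le_mul_of_nonneg_left (hP.inv.posSemidef.sqrt_mul_mul_sqrt T).one_le_det_one_add
        hP.det_pos.le
    _ = (P + T).det := by
      rw [hPT, det_mul, hT.det_one_add_mul_eq_det_one_add_sqrt_mul_mul_sqrt]

theorem PosSemidef.det_le_det_add {P T : Matrix n n ℝ} (hP : P.PosSemidef) (hT : T.PosSemidef) :
    P.det ≤ (P + T).det := by
  by_cases hdet : P.det = 0
  · exact hdet ▸ (hP.add hT).det_nonneg
  · exact ((hP.posDef_iff_det_ne_zero).mpr hdet).det_le_det_add hT

end Matrix

/-- For positive semidefinite `A`, `B`, `R`: `det(I + (A+B)R) ≥ det(I + A R)`. -/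
theorem det_one_add_mul_mono
    {m : ℕ} (A B R : Matrix (Fin m) (Fin m) ℝ)
    (hA : A.PosSemidef) (hB : B.PosSemidef) (hR : R.PosSemidef) :
    (1 + A * R).det ≤ (1 + (A + B) * R).det := by
  rw [hR.det_one_add_mul_eq_det_one_add_sqrt_mul_mul_sqrt,
    hR.det_one_add_mul_eq_det_one_add_sqrt_mul_mul_sqrt, Matrix.mul_add, Matrix.add_mul,
    ← add_assoc]
  exact (PosSemidef.one.add (hA.sqrt_mul_mul_sqrt R)).det_le_det_add (hB.sqrt_mul_mul_sqrt R)
end
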